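/- Let H be a Hopf algebra, C a coalgebra, and J : C → H a coalgebra homomorphism. Then the map δ : C → C ⊗ H defined by δ(c) = c_{(2)} ⊗ S(J(c_{(1)})) J(c_{(3)}) is a coflat Hopf coaction of H on C. -/

import Mathlib

open TensorProduct LinearMap Coalgebra

/-- A coflat Hopf coaction of a Hopf algebra `H` on a coalgebra `C`. -/
structure IsCoflatCoaction (R C H : Type) [CommRing R]
    [AddCommGroup C] [Module R C] [Coalgebra R C]
    [Ring H] [HopfAlgebra R H]
    (δ : C →ₗ[R] C ⊗[R] H) : Prop where
  coassoc : (TensorProduct.assoc R C H H).toLinearMap ∘ₗ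
      (TensorProduct.map δ (LinearMap.id : H →ₗ[R] H)) ∘ₗ δ
      = (TensorProduct.map (LinearMap.id : C →ₗ[R] C) (Coalgebra.comul (R := R))) ∘ₗ δ
  counitary : (TensorProduct.rid R C).toLinearMap ∘ₗ
      (TensorProduct.map (LinearMap.id : C →ₗ[R] C) (Coalgebra.counit (R := R))) ∘ₗ δ
      = LinearMap.id
  coflat_mul : (TensorProduct.map (LinearMap.id : (C ⊗[R] C) →ₗ[R] C ⊗[R] C)
        (LinearMap.mul' R H)) ∘ₗ
      (TensorProduct.tensorTensorTensorComm R C H C H).toLinearMap ∘ₗ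
      (TensorProduct.map δ δ) ∘ₗ Coalgebra.comul
      = (TensorProduct.map (Coalgebra.comul (R := R)) (LinearMap.id : H →ₗ[R] H)) ∘ₗ δ
  coflat_counit : (LinearMap.mul' R R) ∘ₗ
      (TensorProduct.map (Coalgebra.counit (R := R)) (Coalgebra.counit (R := R))) ∘ₗ δ
      = Coalgebra.counit

/-- The inner coaction `δ c = c₍₂₎ ⊗ S(J(c₍₁₎)) J(c₍₃₎)` associated to a coalgebra
homomorphism `J : C → H`. -/
noncomputable def innerCoaction (R C H : Type) [CommRing R]
    [AddCommGroup C] [Module R C] [Coalgebra R C] [Ring H] [HopfAlgebra R H]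
    (J : C →ₗc[R] H) : C →ₗ[R] C ⊗[R] H :=
  (TensorProduct.map (LinearMap.id : C →ₗ[R] C) (LinearMap.mul' R H)) ∘ₗ
    (TensorProduct.assoc R C H H).toLinearMap ∘ₗ
    (TensorProduct.map
      ((TensorProduct.comm R H C).toLinearMap ∘ₗ
        TensorProduct.map ((HopfAlgebra.antipode (R := R)) ∘ₗ J.toLinearMap)
          (LinearMap.id : C →ₗ[R] C))
      J.toLinearMap) ∘ₗ
    (TensorProduct.map (Coalgebra.comul (R := R)) (LinearMap.id : C →ₗ[R] C)) ∘ₗ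
    Coalgebra.comul

/-!
Write `δ = sandwich (S ∘ J) J`, that is `δ c = c₍₂₎ ⊗ S (J c₍₁₎) * J c₍₃₎`. The inclusion
`ι : C → T C` into the tensor algebra has a linear left inverse, so `δ` is determined by
`(ι ⊗ id) ∘ δ`, and this map is the convolution product `(1 ⊗ S J) * (ι ⊗ 1) * (1 ⊗ J)` of linear
maps `C → T C ⊗ H`. Each axiom thereby becomes an identity in a convolution algebra, in which
coassociativity of `C` is absorbed by associativity of the convolution product:
* coassociativity: push the algebra map `id ⊗ Δ` through the product; `S ∘ J` is
  anti-comultiplicative (because `Δ ∘ S = (S ⊗ S) ∘ τ ∘ Δ`) and `J` is comultiplicative;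
* counitality: push `id ⊗ ε` through the product, using `ε ∘ S ∘ J = ε ∘ J = ε`;
* coflatness: in `δ (c₍₁₎) δ (c₍₂₎)` the middle factors form `J * (S ∘ J) = 1`.
-/

open WithConv

namespace AlgHom
variable {R C A B : Type*} [CommSemiring R] [AddCommMonoid C] [Module R C] [Coalgebra R C]
  [Semiring A] [Algebra R A] [Semiring B] [Algebra R B]

variable (C) in
noncomputable def postcompConv (h : A →ₐ[R] B) :
    WithConv (C →ₗ[R] A) →+* WithConv (C →ₗ[R] B) where
  toFun F := toConv (h.toLinearMap ∘ₗ F.ofConv)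
  map_one' := by ext; simp
  map_mul' F G := by rw [LinearMap.algHom_comp_convMul_distrib]
  map_zero' := by ext; simp
  map_add' F G := by ext; simp

@[simp] lemma postcompConv_toConv (h : A →ₐ[R] B) (F : C →ₗ[R] A) :
    h.postcompConv C (toConv F) = toConv (h.toLinearMap ∘ₗ F) := rfl

end AlgHom

namespace LinearMap
variable {R C A B : Type*} [CommSemiring R] [AddCommMonoid C] [Module R C] [Coalgebra R C]
  [Semiring A] [Algebra R A] [Semiring B] [Algebra R B]

open Algebra.TensorProduct (includeLeft includeRight)

lemma includeLeft_convMul_includeRight (f : C →ₗ[R] A) (g : C →ₗ[R] B) :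
    toConv (includeLeft.toLinearMap ∘ₗ f) * toConv (includeRight.toLinearMap ∘ₗ g) =
      toConv (map f g ∘ₗ comul) := by
  have : mul' R (A ⊗[R] B) ∘ₗ map (includeLeft.toLinearMap ∘ₗ f)
      (includeRight.toLinearMap ∘ₗ g) = map f g := by
    ext; simp
  rw [convMul_def, ofConv_toConv, ofConv_toConv, ← comp_assoc, this]

lemma includeRight_convMul_includeLeft (f : C →ₗ[R] A) (g : C →ₗ[R] B) :
    toConv (includeRight.toLinearMap ∘ₗ g) * toConv (includeLeft.toLinearMap ∘ₗ f) =
      toConv (map f g ∘ₗ (TensorProduct.comm R C C).toLinearMap ∘ₗ comul) := by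
  have : mul' R (A ⊗[R] B) ∘ₗ map (includeRight.toLinearMap ∘ₗ g)
      (includeLeft.toLinearMap ∘ₗ f) = map f g ∘ₗ (TensorProduct.comm R C C).toLinearMap := by
    ext; simp
  rw [convMul_def, ofConv_toConv, ofConv_toConv, ← comp_assoc, this, comp_assoc]

end LinearMap

namespace HopfAlgebra
variable {R H : Type*} [CommSemiring R] [Semiring H] [HopfAlgebra R H]

open Algebra.TensorProduct (includeLeft includeRight) in
lemma comul_comp_antipode :
    comul ∘ₗ antipode R =
      map (antipode R) (antipode R) ∘ₗ (TensorProduct.comm R H H).toLinearMap ∘ₗ comul := by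
  -- `(S ⊗ S) ∘ τ ∘ Δ = (1 ⊗ S) * (S ⊗ 1)` is a left and `Δ ∘ S` a right convolution inverse
  -- of `Δ = (· ⊗ 1) * (1 ⊗ ·)`.
  have antipode_mul_id (i : H →ₐ[R] H ⊗[R] H) :
      toConv (i.toLinearMap ∘ₗ antipode R) * toConv (i.toLinearMap ∘ₗ .id) = 1 := by
    rw [← AlgHom.postcompConv_toConv, ← AlgHom.postcompConv_toConv, ← map_mul,
      LinearMap.antipode_mul_id, map_one]
  have comul_eq : toConv (comul : H →ₗ[R] H ⊗[R] H) =
      toConv (includeLeft.toLinearMap ∘ₗ .id) * toConv (includeRight.toLinearMap ∘ₗ .id) := by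
    rw [includeLeft_convMul_includeRight, TensorProduct.map_id, id_comp]
  have left_inv : toConv (map (antipode R) (antipode R) ∘ₗ
      (TensorProduct.comm R H H).toLinearMap ∘ₗ comul) * toConv comul = 1 := by
    rw [← includeRight_convMul_includeLeft, comul_eq, mul_assoc,
      ← mul_assoc (toConv (includeLeft.toLinearMap ∘ₗ antipode R)), antipode_mul_id, one_mul,
      antipode_mul_id]
  exact toConv_injective (left_inv_eq_right_inv left_inv LinearMap.comul_right_inv).symm

end HopfAlgebra

lemma TensorProduct.map_comp_map_eq_id {R M N P Q : Type*} [CommSemiring R] [AddCommMonoid M]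
    [AddCommMonoid N] [AddCommMonoid P] [AddCommMonoid Q] [Module R M] [Module R N] [Module R P]
    [Module R Q] {e₁ : M →ₗ[R] N} {r₁ : N →ₗ[R] M} {e₂ : P →ₗ[R] Q} {r₂ : Q →ₗ[R] P}
    (h₁ : r₁ ∘ₗ e₁ = .id) (h₂ : r₂ ∘ₗ e₂ = .id) : map r₁ r₂ ∘ₗ map e₁ e₂ = .id := by
  rw [← map_comp, h₁, h₂, map_id]

lemma TensorAlgebra.ιInv_comp_ι {R M : Type*} [CommSemiring R] [AddCommMonoid M] [Module R M] :
    TensorAlgebra.ιInv ∘ₗ TensorAlgebra.ι R = (LinearMap.id : M →ₗ[R] M) :=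
  LinearMap.ext TensorAlgebra.ι_leftInverse

section Sandwich
variable {R C A B : Type*} [CommSemiring R] [AddCommMonoid C] [Module R C] [Coalgebra R C]
  [Semiring A] [Algebra R A] [Semiring B] [Algebra R B]

open Algebra.TensorProduct (includeLeft includeRight)
open TensorAlgebra (ι ιInv ιInv_comp_ι)

/-- `sandwich f g c = c₍₂₎ ⊗ f c₍₁₎ * g c₍₃₎`. -/
noncomputable def sandwich (f g : C →ₗ[R] A) : C →ₗ[R] C ⊗[R] A :=
  map .id (mul' R A) ∘ₗ (TensorProduct.assoc R C A A).toLinearMap ∘ₗ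
    map ((TensorProduct.comm R A C).toLinearMap ∘ₗ map f .id) g ∘ₗ map comul .id ∘ₗ comul

lemma toConv_map_comp_sandwich (φ : C →ₗ[R] B) (f g : C →ₗ[R] A) :
    toConv (map φ .id ∘ₗ sandwich f g) =
      toConv ((includeRight : A →ₐ[R] B ⊗[R] A).toLinearMap ∘ₗ f) *
        toConv ((includeLeft : B →ₐ[R] B ⊗[R] A).toLinearMap ∘ₗ φ) *
        toConv ((includeRight : A →ₐ[R] B ⊗[R] A).toLinearMap ∘ₗ g) := by
  set F := (includeRight : A →ₐ[R] B ⊗[R] A).toLinearMap ∘ₗ f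
  set Φ := (includeLeft : B →ₐ[R] B ⊗[R] A).toLinearMap ∘ₗ φ
  set G := (includeRight : A →ₐ[R] B ⊗[R] A).toLinearMap ∘ₗ g
  have outer : map φ .id ∘ₗ map .id (mul' R A) ∘ₗ (TensorProduct.assoc R C A A).toLinearMap ∘ₗ
      map ((TensorProduct.comm R A C).toLinearMap ∘ₗ map f .id) g =
      mul' R (B ⊗[R] A) ∘ₗ map (mul' R (B ⊗[R] A) ∘ₗ map F Φ) G := by
    ext; simp [F, Φ, G]
  have split : map (mul' R (B ⊗[R] A) ∘ₗ map F Φ ∘ₗ comul) G =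
      map (mul' R (B ⊗[R] A) ∘ₗ map F Φ) G ∘ₗ map comul .id := by
    rw [← map_comp, comp_id, comp_assoc]
  rw [LinearMap.convMul_def, LinearMap.convMul_def, ofConv_toConv, ofConv_toConv, ofConv_toConv,
    ofConv_toConv, split]
  exact congrArg (fun T ↦ toConv (T ∘ₗ map comul .id ∘ₗ comul)) outer

local notation "𝕋" => TensorAlgebra R C

lemma sandwich_coflat_mul (f g : C →ₗ[R] A) (hgf : toConv g * toConv f = 1) :
    map .id (mul' R A) ∘ₗ (tensorTensorTensorComm R C A C A).toLinearMap ∘ₗ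
      map (sandwich f g) (sandwich f g) ∘ₗ comul = map comul .id ∘ₗ sandwich f g := by
  let E : (C ⊗[R] C) ⊗[R] A →ₗ[R] (𝕋 ⊗[R] 𝕋) ⊗[R] A := map (map (ι R) (ι R)) .id
  have hE : Function.Injective E := injective_of_comp_eq_id _ (map (map ιInv ιInv) .id) <|
    map_comp_map_eq_id (map_comp_map_eq_id ιInv_comp_ι ιInv_comp_ι) (id_comp _)
  rw [← cancel_left hE]
  apply toConv_injective
  let j₁ : 𝕋 ⊗[R] A →ₐ[R] (𝕋 ⊗[R] 𝕋) ⊗[R] A := Algebra.TensorProduct.map includeLeft (.id R A)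
  let j₂ : 𝕋 ⊗[R] A →ₐ[R] (𝕋 ⊗[R] 𝕋) ⊗[R] A := Algebra.TensorProduct.map includeRight (.id R A)
  let ρ : A →ₐ[R] (𝕋 ⊗[R] 𝕋) ⊗[R] A := includeRight
  let ι₁ : 𝕋 →ₐ[R] (𝕋 ⊗[R] 𝕋) ⊗[R] A := includeLeft.comp includeLeft
  let ι₂ : 𝕋 →ₐ[R] (𝕋 ⊗[R] 𝕋) ⊗[R] A := includeLeft.comp includeRight
  have embed_mul : (E ∘ₗ map .id (mul' R A)) ∘ₗ (tensorTensorTensorComm R C A C A).toLinearMap =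
      (mul' R ((𝕋 ⊗[R] 𝕋) ⊗[R] A) ∘ₗ map j₁.toLinearMap j₂.toLinearMap) ∘ₗ
        map (map (ι R) .id) (map (ι R) .id) := by
    ext; simp [E, j₁, j₂]
  have cancel_gf (X) : toConv (ρ.toLinearMap ∘ₗ g) * (toConv (ρ.toLinearMap ∘ₗ f) * X) = X := by
    rw [← mul_assoc, ← AlgHom.postcompConv_toConv, ← AlgHom.postcompConv_toConv, ← map_mul, hgf,
      map_one, one_mul]
  calc toConv (E ∘ₗ map .id (mul' R A) ∘ₗ (tensorTensorTensorComm R C A C A).toLinearMap ∘ₗ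
        map (sandwich f g) (sandwich f g) ∘ₗ comul)
      = j₁.postcompConv C (toConv (map (ι R) .id ∘ₗ sandwich f g)) *
          j₂.postcompConv C (toConv (map (ι R) .id ∘ₗ sandwich f g)) := by
        rw [AlgHom.postcompConv_toConv, AlgHom.postcompConv_toConv, LinearMap.convMul_def,
          ofConv_toConv, ofConv_toConv]
        simp only [map_comp, ← comp_assoc, embed_mul]
    _ = toConv (ρ.toLinearMap ∘ₗ f) *
          (toConv (ι₁.toLinearMap ∘ₗ ι R) * toConv (ι₂.toLinearMap ∘ₗ ι R)) *
          toConv (ρ.toLinearMap ∘ₗ g) := by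
        rw [toConv_map_comp_sandwich]
        simp only [map_mul, AlgHom.postcompConv_toConv, ← comp_assoc, ← AlgHom.comp_toLinearMap,
          j₁, j₂, Algebra.TensorProduct.map_comp_includeLeft,
          Algebra.TensorProduct.map_comp_includeRight, AlgHom.comp_id, mul_assoc]
        rw [cancel_gf]
    _ = toConv (ρ.toLinearMap ∘ₗ f) *
          toConv (includeLeft.toLinearMap ∘ₗ map (ι R) (ι R) ∘ₗ comul) *
          toConv (ρ.toLinearMap ∘ₗ g) := by
        rw [← AlgHom.postcompConv_toConv _ (map (ι R) (ι R) ∘ₗ comul),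
          ← includeLeft_convMul_includeRight, map_mul]
        rfl
    _ = toConv (E ∘ₗ map comul .id ∘ₗ sandwich f g) := by
        rw [← toConv_map_comp_sandwich, ← comp_assoc, ← map_comp, comp_id]

end Sandwich

section AssocComul
variable {R B A : Type*} [CommSemiring R] [Semiring B] [Algebra R B] [Semiring A] [Bialgebra R A]

open Algebra.TensorProduct (includeLeft includeRight)

variable (R B A) in
noncomputable def assocComul : B ⊗[R] A →ₐ[R] (B ⊗[R] A) ⊗[R] A :=
  (Algebra.TensorProduct.assoc R R R B A A).symm.toAlgHom.comp
    (Algebra.TensorProduct.map (.id R B) (Bialgebra.comulAlgHom R A))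

lemma assocComul_comp_includeLeft :
    (assocComul R B A).comp includeLeft = includeLeft.comp includeLeft := by
  ext; simp [assocComul, Algebra.TensorProduct.one_def]

lemma assocComul_comp_includeRight :
    (assocComul R B A).toLinearMap ∘ₗ includeRight.toLinearMap =
      map (includeRight : A →ₐ[R] B ⊗[R] A).toLinearMap .id ∘ₗ comul := by
  ext a
  simp [assocComul]
  induction comul (R := R) a using TensorProduct.induction_on <;> simp_all [tmul_add]

lemma map_map_comp_assoc_symm_comp_map_comul {M : Type*} [AddCommMonoid M] [Module R M]
    (φ : M →ₗ[R] B) :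
    map (map φ .id) .id ∘ₗ (TensorProduct.assoc R M A A).symm.toLinearMap ∘ₗ map .id comul =
      (assocComul R B A).toLinearMap ∘ₗ map φ .id := by
  ext m a
  simp [assocComul]
  induction comul (R := R) a using TensorProduct.induction_on <;> simp_all [tmul_add]

end AssocComul

section Bialgebra
variable {R C A : Type*} [CommSemiring R] [AddCommMonoid C] [Module R C] [Coalgebra R C]
  [Semiring A] [Bialgebra R A]

open Algebra.TensorProduct (includeLeft includeRight)
open TensorAlgebra (ι ιInv ιInv_comp_ι)

lemma assocComul_postcompConv_antiComul {B : Type*} [Semiring B] [Algebra R B] (f : C →ₗ[R] A)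
    (hf : comul ∘ₗ f = map f f ∘ₗ (TensorProduct.comm R C C).toLinearMap ∘ₗ comul) :
    (assocComul R B A).postcompConv C (toConv (includeRight.toLinearMap ∘ₗ f)) =
      toConv (includeRight.toLinearMap ∘ₗ f) *
        toConv (includeLeft.toLinearMap ∘ₗ (includeRight : A →ₐ[R] B ⊗[R] A).toLinearMap ∘ₗ f) := by
  rw [includeRight_convMul_includeLeft, AlgHom.postcompConv_toConv, ← comp_assoc,
    assocComul_comp_includeRight, comp_assoc, hf, ← comp_assoc, ← map_comp, id_comp]

lemma assocComul_postcompConv_comul {B : Type*} [Semiring B] [Algebra R B] (g : C →ₗ[R] A)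
    (hg : comul ∘ₗ g = map g g ∘ₗ comul) :
    (assocComul R B A).postcompConv C (toConv (includeRight.toLinearMap ∘ₗ g)) =
      toConv (includeLeft.toLinearMap ∘ₗ (includeRight : A →ₐ[R] B ⊗[R] A).toLinearMap ∘ₗ g) *
        toConv (includeRight.toLinearMap ∘ₗ g) := by
  rw [includeLeft_convMul_includeRight, AlgHom.postcompConv_toConv, ← comp_assoc,
    assocComul_comp_includeRight, comp_assoc, hg, ← comp_assoc, ← map_comp, id_comp]

lemma sandwich_coassoc (f g : C →ₗ[R] A)
    (hf : comul ∘ₗ f = map f f ∘ₗ (TensorProduct.comm R C C).toLinearMap ∘ₗ comul)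
    (hg : comul ∘ₗ g = map g g ∘ₗ comul) :
    (TensorProduct.assoc R C A A).toLinearMap ∘ₗ map (sandwich f g) .id ∘ₗ sandwich f g =
      map .id comul ∘ₗ sandwich f g := by
  suffices h : map (sandwich f g) .id ∘ₗ sandwich f g =
      (TensorProduct.assoc R C A A).symm.toLinearMap ∘ₗ map .id comul ∘ₗ sandwich f g by
    rw [h, ← comp_assoc, LinearEquiv.comp_symm, id_comp]
  let E : (C ⊗[R] A) ⊗[R] A →ₗ[R] (TensorAlgebra R C ⊗[R] A) ⊗[R] A := map (map (ι R) .id) .id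
  have hE : Function.Injective E := injective_of_comp_eq_id _ (map (map ιInv .id) .id) <|
    map_comp_map_eq_id (map_comp_map_eq_id ιInv_comp_ι (id_comp _)) (id_comp _)
  rw [← cancel_left hE]
  apply toConv_injective
  calc toConv (E ∘ₗ map (sandwich f g) .id ∘ₗ sandwich f g)
      = toConv (map (map (ι R) .id ∘ₗ sandwich f g) .id ∘ₗ sandwich f g) := by
        rw [← comp_assoc, ← map_comp, comp_id]
    _ = (assocComul R _ A).postcompConv C (toConv (map (ι R) .id ∘ₗ sandwich f g)) := by
        rw [toConv_map_comp_sandwich, ← AlgHom.postcompConv_toConv includeLeft,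
          toConv_map_comp_sandwich, map_mul, map_mul, map_mul, map_mul,
          assocComul_postcompConv_antiComul f hf, assocComul_postcompConv_comul g hg]
        simp only [AlgHom.postcompConv_toConv, ← comp_assoc, ← AlgHom.comp_toLinearMap,
          assocComul_comp_includeLeft, mul_assoc]
    _ = toConv (E ∘ₗ (TensorProduct.assoc R C A A).symm.toLinearMap ∘ₗ map .id comul ∘ₗ
          sandwich f g) :=
        congrArg (fun F ↦ toConv (F ∘ₗ sandwich f g))
          (map_map_comp_assoc_symm_comp_map_comul (ι R)).symm

lemma sandwich_counitary (f g : C →ₗ[R] A) (hf : counit ∘ₗ f = counit)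
    (hg : counit ∘ₗ g = counit) :
    (TensorProduct.rid R C).toLinearMap ∘ₗ map .id counit ∘ₗ sandwich f g = .id := by
  rw [← cancel_left (injective_of_comp_eq_id _ _ (ιInv_comp_ι (R := R) (M := C)))]
  apply toConv_injective
  let ψ : TensorAlgebra R C ⊗[R] A →ₐ[R] TensorAlgebra R C :=
    (Algebra.TensorProduct.rid R R (TensorAlgebra R C)).toAlgHom.comp
      (Algebra.TensorProduct.map (.id R _) (Bialgebra.counitAlgHom R A))
  have embed_counit : ι R ∘ₗ (TensorProduct.rid R C).toLinearMap ∘ₗ map .id counit =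
      ψ.toLinearMap ∘ₗ map (ι R) .id := by
    ext; simp [ψ]
  have ψ_includeRight (u : C →ₗ[R] A) (hu : counit ∘ₗ u = counit) :
      ψ.postcompConv C (toConv (includeRight.toLinearMap ∘ₗ u)) = 1 := by
    ext c
    simp [ψ, Algebra.algebraMap_eq_smul_one, show counit (u c) = (counit c : R) from congr($hu c)]
  have ψ_includeLeft : ψ.comp includeLeft = .id R _ := by ext; simp [ψ]
  calc toConv (ι R ∘ₗ (TensorProduct.rid R C).toLinearMap ∘ₗ map .id counit ∘ₗ sandwich f g)
      = ψ.postcompConv C (toConv (map (ι R) .id ∘ₗ sandwich f g)) :=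
        congrArg (fun F ↦ toConv (F ∘ₗ sandwich f g)) embed_counit
    _ = toConv (ι R ∘ₗ .id) := by
        rw [toConv_map_comp_sandwich, map_mul, map_mul, ψ_includeRight f hf, ψ_includeRight g hg,
          one_mul, mul_one, AlgHom.postcompConv_toConv, ← comp_assoc, ← AlgHom.comp_toLinearMap,
          ψ_includeLeft]
        rfl

lemma sandwich_coflat_counit (f g : C →ₗ[R] A) (hf : counit ∘ₗ f = counit)
    (hg : counit ∘ₗ g = counit) :
    mul' R R ∘ₗ map counit counit ∘ₗ sandwich f g = counit := by
  have : mul' R R ∘ₗ map (counit : C →ₗ[R] R) (counit : A →ₗ[R] R) =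
      counit ∘ₗ (TensorProduct.rid R C).toLinearMap ∘ₗ map .id counit := by
    ext; simp [mul_comm]
  rw [← comp_assoc, this, comp_assoc, comp_assoc, sandwich_counitary f g hf hg, comp_id]

end Bialgebra

namespace CoalgHom
variable {R C H : Type*} [CommSemiring R] [AddCommMonoid C] [Module R C] [Coalgebra R C]
  [Semiring H] [HopfAlgebra R H] (J : C →ₗc[R] H)

open HopfAlgebra (antipode)

lemma counit_comp_antipode_comp : counit ∘ₗ antipode R ∘ₗ J.toLinearMap = counit := by
  rw [← LinearMap.comp_assoc, HopfAlgebra.counit_comp_antipode, J.counit_comp]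

lemma comul_comp_antipode_comp :
    comul ∘ₗ antipode R ∘ₗ J.toLinearMap =
      map (antipode R ∘ₗ J.toLinearMap) (antipode R ∘ₗ J.toLinearMap) ∘ₗ
        (TensorProduct.comm R C C).toLinearMap ∘ₗ comul := by
  rw [← LinearMap.comp_assoc, HopfAlgebra.comul_comp_antipode, LinearMap.comp_assoc,
    LinearMap.comp_assoc, ← J.map_comp_comul, ← LinearMap.comp_assoc _ (map _ _),
    ← map_comp_comm_eq, map_comp, LinearMap.comp_assoc, LinearMap.comp_assoc]

lemma convMul_antipode_comp :
    toConv J.toLinearMap * toConv (antipode R ∘ₗ J.toLinearMap) = 1 :=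
  calc toConv J.toLinearMap * toConv (antipode R ∘ₗ J.toLinearMap)
      = toConv ((toConv (LinearMap.id : H →ₗ[R] H) * toConv (antipode R)).ofConv ∘ₗ
          J.toLinearMap) := by
        rw [LinearMap.convMul_comp_coalgHom_distrib]; rfl
    _ = 1 := by
        rw [LinearMap.id_mul_antipode]; ext; simp

end CoalgHom

/-- the inner coaction associated to a coalgebra homomorphism `J : C → H`
is a coflat Hopf coaction of `H` on `C`. -/
theorem innerCoaction_isCoflatCoaction (R C H : Type) [CommRing R]
    [AddCommGroup C] [Module R C] [Coalgebra R C] [Ring H] [HopfAlgebra R H]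
    (J : C →ₗc[R] H) :
    IsCoflatCoaction R C H (innerCoaction R C H J) :=
  { coassoc := sandwich_coassoc _ _ J.comul_comp_antipode_comp J.map_comp_comul.symm
    counitary := sandwich_counitary _ _ J.counit_comp_antipode_comp J.counit_comp
    coflat_mul := sandwich_coflat_mul _ _ J.convMul_antipode_comp
    coflat_counit := sandwich_coflat_counit _ _ J.counit_comp_antipode_comp J.counit_comp }
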